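/- Let S be a finite semigroup, J a regular J-class, x, y ∈ J, and x', y' inverses of x, y respectively (xx'x = x, x'xx' = x', yy'y = y, y'yy' = y'). Let I = F(J) be the ideal of elements not J-above J, and let η : F(J) ∪ J → (F(J) ∪ J)/F(J) be the Rees quotient map followed by any homomorphism ψ. Then for all s, t ∈ S: ψ(η(xsy)) = ψ(η(xty)) if and only if ψ(η(x'xsyy')) = ψ(η(x'xtyy')). In particular, the congruence defined by the condition 'xsy and xty have the same image for all x, y ∈ J' is unchanged if one quantifies only over idempotents x, y of J. -/
import Mathlib


/-- The J-preorder in a semigroup: `s ≥_J t` iff `t ∈ S¹ s S¹`. -/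
def sJge {S : Type} [Semigroup S] (s t : S) : Prop :=
  t = s ∨ (∃ a, s * a = t) ∨ (∃ a, a * s = t) ∨ (∃ a b, a * s * b = t)

namespace Stmt16Aux

variable {S : Type} [Semigroup S]

lemma ge_refl (s : S) : sJge s s := Or.inl rfl
lemma ge2 {s : S} (a : S) {t : S} (h : s * a = t) : sJge s t := Or.inr (Or.inl ⟨a, h⟩)
lemma ge3 {s : S} (a : S) {t : S} (h : a * s = t) : sJge s t := Or.inr (Or.inr (Or.inl ⟨a, h⟩))
lemma ge4 {s : S} (a b : S) {t : S} (h : a * s * b = t) : sJge s t :=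
  Or.inr (Or.inr (Or.inr ⟨a, b, h⟩))

lemma sJge_trans {s t u : S} (h1 : sJge s t) (h2 : sJge t u) : sJge s u := by
  obtain rfl | ⟨a, rfl⟩ | ⟨a, rfl⟩ | ⟨a, b, rfl⟩ := h2 <;>
    obtain rfl | ⟨c, rfl⟩ | ⟨c, rfl⟩ | ⟨c, d, rfl⟩ := h1
  · exact ge_refl _
  · exact ge2 c rfl
  · exact ge3 c rfl
  · exact ge4 c d rfl
  · exact ge2 a rfl
  · exact ge2 (c * a) (by simp [mul_assoc])
  · exact ge4 c a rfl
  · exact ge4 c (d * a) (by simp [mul_assoc])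
  · exact ge3 a rfl
  · exact ge4 a c (by simp [mul_assoc])
  · exact ge3 (a * c) (by simp [mul_assoc])
  · exact ge4 (a * c) d (by simp [mul_assoc])
  · exact ge4 a b rfl
  · exact ge4 a (c * b) (by simp [mul_assoc])
  · exact ge4 (a * c) b (by simp [mul_assoc])
  · exact ge4 (a * c) (d * b) (by simp [mul_assoc])

/-- powers: pw a n = a^(n+1) -/
def pw (a : S) : ℕ → S
  | 0 => a
  | n + 1 => pw a n * a

lemma pw_comm (a : S) (n : ℕ) : a * pw a n = pw a n * a := by
  induction n with
  | zero => rfl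
  | succ n ih => show a * (pw a n * a) = _; rw [← mul_assoc, ih]; rfl

lemma pw_succ' (a : S) (n : ℕ) : pw a (n + 1) = a * pw a n := by
  rw [pw_comm]; rfl

lemma pw_add (a : S) (m n : ℕ) : pw a m * pw a n = pw a (m + n + 1) := by
  induction n with
  | zero => rfl
  | succ n ih => show pw a m * (pw a n * a) = _; rw [← mul_assoc, ih]; rfl

lemma pw_shift (a : S) {m m' : ℕ} (h : pw a m = pw a m') (t : ℕ) :
    pw a (m + t) = pw a (m' + t) := by
  induction t with
  | zero => exact h
  | succ t ih => show pw a (m + t) * a = pw a (m' + t) * a; rw [ih]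

lemma exists_idem_pw [Fintype S] (a : S) : ∃ N, pw a N * pw a N = pw a N := by
  obtain ⟨i, j, hne, hij⟩ := Fintype.exists_ne_map_eq_of_card_lt
    (fun n : Fin (Fintype.card S + 1) => pw a n) (by simp)
  have hne' : (i : ℕ) ≠ (j : ℕ) := fun h => hne (Fin.ext h)
  wlog hlt : (i : ℕ) < (j : ℕ) generalizing i j
  · exact this j i hne.symm hij.symm (Ne.symm hne') (by omega)
  set d : ℕ := (j : ℕ) - i with hd
  have hd1 : 1 ≤ d := by omega
  have hbase : pw a ((i : ℕ) + d) = pw a (i : ℕ) := by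
    have h : ((i : ℕ) + d) = (j : ℕ) := by omega
    rw [h]; exact hij.symm
  have hstep : ∀ M, (i : ℕ) ≤ M → pw a (M + d) = pw a M := by
    intro M hM
    obtain ⟨t, rfl⟩ := Nat.exists_eq_add_of_le hM
    have h1 : pw a ((i : ℕ) + d + t) = pw a ((i : ℕ) + t) := pw_shift a hbase t
    have h2 : (i : ℕ) + t + d = (i : ℕ) + d + t := by omega
    rw [h2, h1]
  have hrep : ∀ M, (i : ℕ) ≤ M → ∀ k, pw a (M + k * d) = pw a M := by
    intro M hM k
    induction k with
    | zero => simp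
    | succ k ih =>
        have h : M + (k + 1) * d = (M + k * d) + d := by ring
        rw [h, hstep _ (by omega), ih]
  set D : ℕ := ((i : ℕ) + 1) * d with hD
  have hDge : (i : ℕ) + 1 ≤ D := by
    calc (i : ℕ) + 1 = ((i : ℕ) + 1) * 1 := by ring
    _ ≤ ((i : ℕ) + 1) * d := Nat.mul_le_mul_left _ hd1
  refine ⟨D - 1, ?_⟩
  have hNadd : (D - 1) + (D - 1) + 1 = (D - 1) + ((i : ℕ) + 1) * d := by omega
  rw [pw_add, hNadd, hrep (D - 1) (by omega) ((i : ℕ) + 1)]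


lemma iter {u a b : S} (h : u = a * u * b) : ∀ n, u = pw a n * u * pw b n := by
  intro n
  induction n with
  | zero => exact h
  | succ n ih =>
      calc u = pw a n * u * pw b n := ih
      _ = pw a n * (a * u * b) * pw b n := by rw [← h]
      _ = pw a (n + 1) * u * pw b (n + 1) := by
            rw [pw_succ' b n]; show _ = pw a n * a * u * (b * pw b n); simp [mul_assoc]

lemma stab_r [Fintype S] {u b : S} (h : sJge (u * b) u) :
    u = u * b ∨ ∃ γ, u = (u * b) * γ := by
  obtain h | ⟨a, ha⟩ | ⟨a, ha⟩ | ⟨a, c, hac⟩ := h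
  · exact Or.inl h
  · exact Or.inr ⟨a, ha.symm⟩
  · -- a * (u * b) = u
    have h0 : u = a * u * b := by rw [← mul_assoc] at ha; exact ha.symm
    obtain ⟨N, hN⟩ := exists_idem_pw b
    have h2 := iter h0 N
    have h3 : u * pw b N = u := by
      calc u * pw b N = (pw a N * u * pw b N) * pw b N := by rw [← h2]
      _ = pw a N * u * (pw b N * pw b N) := by simp [mul_assoc]
      _ = pw a N * u * pw b N := by rw [hN]
      _ = u := h2.symm
    cases N with
    | zero => exact Or.inl h3.symm
    | succ N =>
        refine Or.inr ⟨pw b N, ?_⟩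
        calc u = u * pw b (N + 1) := h3.symm
        _ = u * (b * pw b N) := by rw [pw_succ']
        _ = (u * b) * pw b N := by rw [mul_assoc]
  · -- a * (u * b) * c = u
    have h0 : u = a * u * (b * c) := by
      calc u = a * (u * b) * c := hac.symm
      _ = a * u * (b * c) := by simp [mul_assoc]
    obtain ⟨N, hN⟩ := exists_idem_pw (b * c)
    have h2 := iter h0 N
    have h3 : u * pw (b * c) N = u := by
      calc u * pw (b * c) N = (pw a N * u * pw (b * c) N) * pw (b * c) N := by rw [← h2]
      _ = pw a N * u * (pw (b * c) N * pw (b * c) N) := by simp [mul_assoc]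
      _ = pw a N * u * pw (b * c) N := by rw [hN]
      _ = u := h2.symm
    cases N with
    | zero =>
        refine Or.inr ⟨c, ?_⟩
        calc u = u * pw (b * c) 0 := h3.symm
        _ = u * (b * c) := rfl
        _ = (u * b) * c := by rw [mul_assoc]
    | succ N =>
        refine Or.inr ⟨c * pw (b * c) N, ?_⟩
        calc u = u * pw (b * c) (N + 1) := h3.symm
        _ = u * ((b * c) * pw (b * c) N) := by rw [pw_succ']
        _ = (u * b) * (c * pw (b * c) N) := by simp [mul_assoc]

lemma stab_l [Fintype S] {u a : S} (h : sJge (a * u) u) :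
    u = a * u ∨ ∃ δ, u = δ * (a * u) := by
  obtain h | ⟨c, hc⟩ | ⟨c, hc⟩ | ⟨p, q, hpq⟩ := h
  · exact Or.inl h
  · -- (a * u) * c = u
    have h0 : u = a * u * c := hc.symm
    obtain ⟨N, hN⟩ := exists_idem_pw a
    have h2 := iter h0 N
    have h3 : pw a N * u = u := by
      calc pw a N * u = pw a N * (pw a N * u * pw c N) := by rw [← h2]
      _ = (pw a N * pw a N) * u * pw c N := by simp [mul_assoc]
      _ = pw a N * u * pw c N := by rw [hN]
      _ = u := h2.symm
    cases N with
    | zero => exact Or.inl h3.symm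
    | succ N =>
        refine Or.inr ⟨pw a N, ?_⟩
        calc u = pw a (N + 1) * u := h3.symm
        _ = (pw a N * a) * u := rfl
        _ = pw a N * (a * u) := by rw [mul_assoc]
  · exact Or.inr ⟨c, hc.symm⟩
  · -- p * (a * u) * q = u
    have h0 : u = (p * a) * u * q := by
      calc u = p * (a * u) * q := hpq.symm
      _ = (p * a) * u * q := by simp [mul_assoc]
    obtain ⟨N, hN⟩ := exists_idem_pw (p * a)
    have h2 := iter h0 N
    have h3 : pw (p * a) N * u = u := by
      calc pw (p * a) N * u = pw (p * a) N * (pw (p * a) N * u * pw q N) := by rw [← h2]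
      _ = (pw (p * a) N * pw (p * a) N) * u * pw q N := by simp [mul_assoc]
      _ = pw (p * a) N * u * pw q N := by rw [hN]
      _ = u := h2.symm
    cases N with
    | zero =>
        refine Or.inr ⟨p, ?_⟩
        calc u = pw (p * a) 0 * u := h3.symm
        _ = (p * a) * u := rfl
        _ = p * (a * u) := by rw [mul_assoc]
    | succ N =>
        refine Or.inr ⟨pw (p * a) N * p, ?_⟩
        calc u = pw (p * a) (N + 1) * u := h3.symm
        _ = (pw (p * a) N * (p * a)) * u := rfl
        _ = (pw (p * a) N * p) * (a * u) := by simp [mul_assoc]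


lemma exists_inv {u v : S} (h : u * v * u = u) :
    ∃ u', u * u' * u = u ∧ u' * u * u' = u' := by
  refine ⟨v * u * v, ?_, ?_⟩
  · calc u * (v * u * v) * u = (u * v * u) * (v * u) := by simp [mul_assoc]
    _ = u * (v * u) := by rw [h]
    _ = u * v * u := by rw [mul_assoc]
    _ = u := h
  · calc (v * u * v) * u * (v * u * v)
        = v * ((u * v * u) * (v * (u * v))) := by simp [mul_assoc]
    _ = v * (u * (v * (u * v))) := by rw [h]
    _ = v * ((u * v * u) * v) := by simp [mul_assoc]
    _ = v * (u * v) := by rw [h]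
    _ = v * u * v := by rw [mul_assoc]

/-- key regularity lemma: if `e` is idempotent and `u` is J-equivalent to `e`
(in a finite semigroup), then `u` is regular. -/
lemma reg_of_J [Fintype S] {e u : S} (he : e * e = e)
    (h1 : sJge u e) (h2 : sJge e u) : ∃ v, u * v * u = u := by
  have sub1 : ∀ β : S, e = u * β → ∃ v, u * v * u = u := by
    intro β heq
    have hst : sJge (u * β) u := by rw [← heq]; exact h2
    obtain h | ⟨γ, hγ⟩ := stab_r hst
    · have hu : u = e := by rw [heq, ← h]
      exact ⟨u, by rw [hu, he, he]⟩
    · rw [← heq] at hγ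
      refine ⟨β, ?_⟩
      calc u * β * u = e * u := by rw [heq]
      _ = e * (e * γ) := by rw [← hγ]
      _ = (e * e) * γ := by rw [mul_assoc]
      _ = e * γ := by rw [he]
      _ = u := hγ.symm
  have sub2 : ∀ α : S, e = α * u → ∃ v, u * v * u = u := by
    intro α heq
    have hst : sJge (α * u) u := by rw [← heq]; exact h2
    obtain h | ⟨δ, hδ⟩ := stab_l hst
    · have hu : u = e := by rw [heq, ← h]
      exact ⟨u, by rw [hu, he, he]⟩
    · rw [← heq] at hδ
      refine ⟨α, ?_⟩
      calc u * α * u = u * (α * u) := by rw [mul_assoc]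
      _ = u * e := by rw [← heq]
      _ = (δ * e) * e := by rw [← hδ]
      _ = δ * (e * e) := by rw [mul_assoc]
      _ = δ * e := by rw [he]
      _ = u := hδ.symm
  obtain heq | ⟨β, hβ⟩ | ⟨α, hα⟩ | ⟨α, β, hαβ⟩ := h1
  · exact ⟨u, by rw [← heq, he, he]⟩
  · exact sub1 β hβ.symm
  · exact sub2 α hα.symm
  · -- e = (α * u) * β
    have hst2 : sJge (α * u) u := sJge_trans (ge2 β hαβ) h2
    obtain h' | ⟨δ, hδ⟩ := stab_l hst2
    · -- u = α * u, so e = u * β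
      exact sub1 β (by rw [← hαβ, ← h'])
    · have hst3 : sJge ((α * u) * β) (α * u) := by
        rw [hαβ]; exact sJge_trans h2 (ge3 α rfl)
      obtain h'' | ⟨μ, hμ⟩ := stab_r hst3
      · -- α * u = (α * u) * β = e
        have hαue : α * u = e := h''.symm ▸ hαβ ▸ rfl
        refine ⟨α, ?_⟩
        calc u * α * u = u * (α * u) := by rw [mul_assoc]
        _ = u * e := by rw [hαue]
        _ = (δ * (α * u)) * e := by rw [← hδ]
        _ = (δ * e) * e := by rw [hαue]
        _ = δ * (e * e) := by rw [mul_assoc]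
        _ = δ * e := by rw [he]
        _ = δ * (α * u) := by rw [hαue]
        _ = u := hδ.symm
      · -- α * u = e * μ
        have hE : (α * u) * β = e := hαβ
        rw [hE] at hμ
        have key1 : e * (α * u) = α * u := by
          calc e * (α * u) = e * (e * μ) := by rw [← hμ]
          _ = (e * e) * μ := by rw [mul_assoc]
          _ = e * μ := by rw [he]
          _ = α * u := hμ.symm
        refine ⟨β * α, ?_⟩
        calc u * (β * α) * u = (δ * (α * u)) * (β * α) * u := by rw [← hδ]
        _ = δ * (((α * u) * β) * (α * u)) := by simp [mul_assoc]
        _ = δ * (e * (α * u)) := by rw [hE]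
        _ = δ * (α * u) := by rw [key1]
        _ = u := hδ.symm


lemma key {S : Type} [Semigroup S] {J F : Set S}
    (hJ : ∃ w : S, J = {z | sJge z w ∧ sJge w z})
    (hF : F = {u : S | ∀ z ∈ J, ¬ sJge u z})
    {Q : Type} [Semigroup Q] (θ : S → Q)
    (hhom : ∀ a b : S, a ∈ F ∪ J → b ∈ F ∪ J → θ (a * b) = θ a * θ b)
    {x y x' y' : S} (hx : x ∈ J) (hy : y ∈ J)
    (hx1 : x * x' * x = x) (hx2 : x' * x * x' = x')
    (hy1 : y * y' * y = y) (hy2 : y' * y * y' = y')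
    (s t : S) :
    θ (x * s * y) = θ (x * t * y) ↔
      θ (x' * x * s * y * y') = θ (x' * x * t * y * y') := by
  obtain ⟨w, hw⟩ := hJ
  have memJ : ∀ {p q : S}, p ∈ J → sJge p q → sJge q p → q ∈ J := by
    intro p q hp hpq hqp
    rw [hw] at hp ⊢
    exact ⟨sJge_trans hqp hp.1, sJge_trans hp.2 hpq⟩
  have down : ∀ {p q : S}, p ∈ J → sJge p q → q ∈ F ∪ J := by
    intro p q hp hpq
    by_cases hq : q ∈ F
    · exact Or.inl hq
    · right
      rw [hF] at hq
      simp only [Set.mem_setOf_eq, not_forall] at hq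
      obtain ⟨z, hz, hqz⟩ := hq
      rw [not_not] at hqz
      rw [hw] at hz ⊢
      rw [hw] at hp
      exact ⟨sJge_trans hqz hz.1, sJge_trans hp.2 hpq⟩
  have hx'J : x' ∈ J := memJ hx (ge4 x' x' hx2) (ge4 x x hx1)
  have hy'J : y' ∈ J := memJ hy (ge4 y' y' hy2) (ge4 y y hy1)
  -- memberships
  have m1 : ∀ r : S, (x * r * y) ∈ F ∪ J := fun r =>
    down hx (ge2 (r * y) (by rw [← mul_assoc]))
  have m2 : ∀ r : S, (x * r * y) * y' ∈ F ∪ J := fun r =>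
    down hx (ge2 (r * y * y') (by simp [mul_assoc]))
  have m3 : ∀ r : S, (x' * x * r * y * y') ∈ F ∪ J := fun r =>
    down hx'J (ge2 (x * r * y * y') (by simp [mul_assoc]))
  have m4 : ∀ r : S, (x' * x * r * y * y') * y ∈ F ∪ J := fun r =>
    down hx'J (ge2 (x * r * y * y' * y) (by simp [mul_assoc]))
  have M : ∀ r : S, θ (x' * x * r * y * y') = θ x' * (θ (x * r * y) * θ y') := by
    intro r
    have e1 : x' * x * r * y * y' = x' * ((x * r * y) * y') := by simp [mul_assoc]
    rw [e1, hhom x' _ (Or.inr hx'J) (m2 r), hhom (x * r * y) y' (m1 r) (Or.inr hy'J)]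
  have N : ∀ r : S, θ (x * r * y) = θ x * (θ (x' * x * r * y * y') * θ y) := by
    intro r
    have e2 : x * r * y = x * ((x' * x * r * y * y') * y) := by
      calc x * r * y = (x * x' * x) * r * ((y * y' * y)) := by rw [hx1, hy1]
      _ = x * ((x' * x * r * y * y') * y) := by simp [mul_assoc]
    rw [e2, hhom x _ (Or.inr hx) (m4 r), hhom _ y (m3 r) (Or.inr hy)]
  constructor
  · intro h; rw [M s, M t, h]
  · intro h; rw [N s, N t, h]


lemma memJ {S : Type} [Semigroup S] {J : Set S}
    (hJ : ∃ w : S, J = {z | sJge z w ∧ sJge w z})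
    {p q : S} (hp : p ∈ J) (hpq : sJge p q) (hqp : sJge q p) : q ∈ J := by
  obtain ⟨w, hw⟩ := hJ
  rw [hw] at hp ⊢
  exact ⟨sJge_trans hqp hp.1, sJge_trans hp.2 hpq⟩

end Stmt16Aux

open Stmt16Aux

/-- let `J` be a regular J-class of a finite semigroup `S`, `x, y ∈ J`
with inverses `x', y'`, and let `θ` be (the Rees quotient map of the ideal
`F(J) ∪ J` by `F(J)`) followed by any homomorphism; i.e. `θ` is multiplicative on the
ideal `F(J) ∪ J` and constant, with absorbing value `z0`, on `F(J)`.  Then for all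
`s t : S`, `θ(xsy) = θ(xty)` iff `θ(x'xsyy') = θ(x'xtyy')`.  In particular, the
congruence `s ≡ t ⟺ θ(usv) = θ(utv)` for all `u, v ∈ J` is unchanged if one
quantifies only over idempotents `u, v ∈ J`. -/
theorem stmt_16 (S : Type) [Semigroup S] [Fintype S] (J : Set S)
    (hJ : ∃ w : S, J = {z | sJge z w ∧ sJge w z})
    (hreg : ∃ z ∈ J, ∃ z' : S, z * z' * z = z)
    (x y x' y' : S) (hx : x ∈ J) (hy : y ∈ J)
    (hx1 : x * x' * x = x) (hx2 : x' * x * x' = x')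
    (hy1 : y * y' * y = y) (hy2 : y' * y * y' = y')
    (F : Set S) (hF : F = {u : S | ∀ z ∈ J, ¬ sJge u z})
    (Q : Type) [Semigroup Q] (θ : S → Q) (z0 : Q)
    (hhom : ∀ a b : S, a ∈ F ∪ J → b ∈ F ∪ J → θ (a * b) = θ a * θ b)
    (hconst : ∀ u ∈ F, θ u = z0)
    (habs : ∀ q : Q, z0 * q = z0 ∧ q * z0 = z0) :
    (∀ s t : S, θ (x * s * y) = θ (x * t * y) ↔
      θ (x' * x * s * y * y') = θ (x' * x * t * y * y')) ∧
    (∀ s t : S,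
      (∀ u ∈ J, ∀ v ∈ J, θ (u * s * v) = θ (u * t * v)) ↔
      (∀ u ∈ J, ∀ v ∈ J, u * u = u → v * v = v → θ (u * s * v) = θ (u * t * v))) := by
  constructor
  · exact fun s t => key hJ hF θ hhom hx hy hx1 hx2 hy1 hy2 s t
  · intro s t
    constructor
    · exact fun h u hu v hv _ _ => h u hu v hv
    · intro h u hu v hv
      -- the idempotent e = x' * x lies in J
      have he : (x' * x) * (x' * x) = x' * x := by rw [← mul_assoc, hx2]
      have heJ : (x' * x) ∈ J :=
        memJ hJ hx (ge3 x' rfl) (ge3 x (by rw [← mul_assoc]; exact hx1))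
      obtain ⟨w, hw⟩ := hJ
      have hu' := hu
      have hv' := hv
      have heJ' := heJ
      rw [hw] at hu' hv' heJ'
      -- regularity of u and v
      obtain ⟨v0, hv0⟩ := reg_of_J he
        (sJge_trans hu'.1 heJ'.2) (sJge_trans heJ'.1 hu'.2)
      obtain ⟨u', hui1, hui2⟩ := exists_inv hv0
      obtain ⟨v1, hv1⟩ := reg_of_J he
        (sJge_trans hv'.1 heJ'.2) (sJge_trans heJ'.1 hv'.2)
      obtain ⟨v', hvi1, hvi2⟩ := exists_inv hv1
      -- the idempotents u' * u and v * v' lie in J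
      have heu : (u' * u) * (u' * u) = u' * u := by rw [← mul_assoc, hui2]
      have heuJ : (u' * u) ∈ J :=
        memJ ⟨w, hw⟩ hu (ge3 u' rfl) (ge3 u (by rw [← mul_assoc]; exact hui1))
      have hev : (v * v') * (v * v') = v * v' := by rw [← mul_assoc, hvi1]
      have hevJ : (v * v') ∈ J :=
        memJ ⟨w, hw⟩ hv (ge2 v' rfl) (ge2 v hvi1)
      have hid := h (u' * u) heuJ (v * v') hevJ heu hev
      have e3 : ∀ r : S, (u' * u) * r * (v * v') = u' * u * r * v * v' := fun r => by
        simp [mul_assoc]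
      rw [e3 s, e3 t] at hid
      exact (key ⟨w, hw⟩ hF θ hhom hu hv hui1 hui2 hvi1 hvi2 s t).mpr hid
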